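/- arXiv:2106.14061 — 2 statements merged into one kernel-verified Lean document; each statement's English description precedes it below -/
import Mathlib

section
/- Let q be a prime power, fix r, j, m ∈ ℕ with j ≤ m, let H be a j-uniform hypergraph on {1,…,m}, and let S be a finite set of monic irreducible polynomials in 𝔽_q[x]. Let E_S ⊆ (𝔽_q[x])^m be the set of m-tuples that are H-wise relatively r-prime with respect to S, set F = ∏_{f∈S} f^r, and let N = b·q^{deg F} − 1 for some b ∈ ℕ. Then |E_S ∩ ℳ_N| = (b·q^{deg F})^m · ∏_{f ∈ S} q^{−rm·deg f} · ∏_{f ∈ S} [ ∑_{k=0}^m i_k(H) (q^{r·deg f} − 1)^{m−k} ]. -/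
open scoped BigOperators

/-- The number of independent vertex sets of cardinality `k` of the hypergraph `H`. -/
noncomputable def indepCount {m : ℕ} (H : Finset (Finset (Fin m))) (k : ℕ) : ℕ :=
  Nat.card {s : Finset (Fin m) // (∀ e ∈ H, ¬ e ⊆ s) ∧ s.card = k}

/-- The `l`-th polynomial `f_l` in the enumeration of `𝔽_q[x]` determined by the
enumeration `a` of `𝔽_q` (with `a 0 = 0`). -/
noncomputable def fenum {Fq : Type*} [Field Fq] [Fintype Fq]
    (a : Fin (Fintype.card Fq) → Fq) (l : ℕ) : Polynomial Fq :=
  ∑ i ∈ Finset.range (l + 1),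
    Polynomial.C (a ⟨l / (Fintype.card Fq) ^ i % Fintype.card Fq,
      Nat.mod_lt _ Fintype.card_pos⟩) * Polynomial.X ^ i

/-!
Write `q = |𝔽_q|` and `d = deg F`. Since `f_{v + q^d u} = f_v + X^d f_u` for `v < q^d`, and
`v ↦ (f_v mod f^r)_{f ∈ S}` is a bijection from `{0, …, q^d - 1}` onto `∏_{f ∈ S} 𝔽_q[x]/(f^r)`
(it is injective because `F = ∏ f^r` with pairwise coprime factors, and both sides have `q^d`
elements), each residue tuple is attained by exactly `b` of the indices `l ≤ N`. Divisibility by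
`f^r` only sees the `f`-component of the residue, so the count is `b^m` times a product over
`f ∈ S` of the number of `σ : {1, …, m} → 𝔽_q[x]/(f^r)` vanishing identically on no hyperedge.
Sorting such `σ` by their zero set, which must be independent, gives
`∑_k i_k(H) (q^{r deg f} - 1)^{m-k}`.
-/

open Finset Polynomial

section Counting

theorem natCard_subtype_and_forall_mem_range {ι α β : Type*} {φ : α → β}
    (hφ : Function.Injective φ) (Q : (ι → β) → Prop) :
    Nat.card {g : ι → β // Q g ∧ ∀ i, g i ∈ Set.range φ} = Nat.card {t : ι → α // Q (φ ∘ t)} := by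
  refine (Nat.card_eq_of_bijective (fun t => ⟨φ ∘ t.1, t.2, fun i => ⟨t.1 i, rfl⟩⟩) ⟨?_, ?_⟩).symm
  · exact fun t t' h => Subtype.ext (hφ.comp_left (congrArg Subtype.val h))
  · rintro ⟨g, hQ, hg⟩
    obtain ⟨t, ht⟩ := Classical.skolem.1 hg
    have htg : φ ∘ t = g := funext ht
    exact ⟨⟨t, htg ▸ hQ⟩, Subtype.ext htg⟩

theorem natCard_subtype_comp_snd {ι α B R : Type*} [Finite ι] (e : α ≃ B × R)
    (P : (ι → R) → Prop) :
    Nat.card {t : ι → α // P fun i => (e (t i)).2} =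
      Nat.card B ^ Nat.card ι * Nat.card {σ : ι → R // P σ} := by
  rw [← Nat.card_fun, ← Nat.card_prod]
  exact Nat.card_congr
    { toFun t := (fun i => (e (t.1 i)).1, ⟨fun i => (e (t.1 i)).2, t.2⟩)
      invFun p := ⟨fun i => e.symm (p.1 i, p.2.1 i), by simpa using p.2.2⟩
      left_inv t := by simp
      right_inv p := by simp }

theorem natCard_subtype_forall_pi {ι κ : Type*} [Fintype κ] {β : κ → Type*}
    (p : ∀ k, (ι → β k) → Prop) :
    Nat.card {σ : ι → ∀ k, β k // ∀ k, p k fun i => σ i k} =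
      ∏ k, Nat.card {τ : ι → β k // p k τ} := by
  rw [← Nat.card_pi]
  exact Nat.card_congr (((Equiv.piComm _).subtypeEquiv fun σ => Iff.rfl).trans
    Equiv.subtypePiEquivPi)

end Counting

section Hypergraph

variable {m : ℕ} {β : Type*} [Zero β]

def NonvanishingOnEdges (H : Finset (Finset (Fin m))) (σ : Fin m → β) : Prop :=
  ∀ e ∈ H, ¬ ∀ i ∈ e, σ i = 0

theorem card_filter_zeroSet_eq {ι : Type*} [Fintype ι] [DecidableEq ι] [Fintype β]
    [DecidableEq β] (s : Finset ι) :
    #{σ : ι → β | ({i | σ i = 0} : Finset ι) = s} =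
      (Fintype.card β - 1) ^ (Fintype.card ι - #s) := by
  have hpi : ({σ : ι → β | ({i | σ i = 0} : Finset ι) = s} : Finset (ι → β)) =
      Fintype.piFinset fun i => if i ∈ s then {0} else univ.erase 0 := by
    ext σ
    simp only [mem_filter, mem_univ, true_and, Fintype.mem_piFinset, Finset.ext_iff]
    refine forall_congr' fun i => ?_
    split_ifs with hi <;> simp [hi]
  rw [hpi, Fintype.card_piFinset]
  simp only [apply_ite card, card_singleton, card_erase_of_mem (mem_univ _), card_univ]
  rw [prod_ite, prod_const_one, one_mul, prod_const]
  simp [filter_not, card_univ_sdiff]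

theorem card_nonvanishingOnEdges [Finite β] (H : Finset (Finset (Fin m))) :
    Nat.card {σ : Fin m → β // NonvanishingOnEdges H σ} =
      ∑ k ∈ range (m + 1), indepCount H k * (Nat.card β - 1) ^ (m - k) := by
  classical
  have := Fintype.ofFinite β
  set zeroSet : (Fin m → β) → Finset (Fin m) := fun σ => {i | σ i = 0}
  set indep : Finset (Finset (Fin m)) := {s | ∀ e ∈ H, ¬ e ⊆ s}
  have hzeroSet : ∀ σ, NonvanishingOnEdges H σ ↔ zeroSet σ ∈ indep := fun σ => by
    simp [NonvanishingOnEdges, zeroSet, indep, subset_iff]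
  have hindep : ∀ k, indepCount H k = #{s ∈ indep | #s = k} := fun k => by
    rw [indepCount, Nat.card_eq_fintype_card, Fintype.card_subtype, filter_filter]
  calc Nat.card {σ : Fin m → β // NonvanishingOnEdges H σ}
      = #{σ | zeroSet σ ∈ indep} := by
        rw [Nat.card_eq_fintype_card, Fintype.card_subtype]; simp only [hzeroSet]
    _ = ∑ s ∈ indep, #{σ | zeroSet σ = s} := by
        rw [card_eq_sum_card_fiberwise (s := {σ | zeroSet σ ∈ indep}) (t := indep) (f := zeroSet)
          fun σ hσ => (mem_filter.1 hσ).2]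
        refine sum_congr rfl fun s hs => ?_
        rw [filter_filter]
        exact congrArg card (filter_congr fun σ _ => ⟨And.right, fun h => ⟨h ▸ hs, h⟩⟩)
    _ = ∑ s ∈ indep, (Nat.card β - 1) ^ (m - #s) := by
        refine sum_congr rfl fun s _ => ?_
        rw [Nat.card_eq_fintype_card]
        simpa using card_filter_zeroSet_eq (β := β) s
    _ = ∑ k ∈ range (m + 1), indepCount H k * (Nat.card β - 1) ^ (m - k) := by
        rw [← sum_fiberwise_of_maps_to (t := range (m + 1)) (g := card)
          fun s _ => mem_range_succ_iff.2 (card_le_univ s |>.trans_eq (Fintype.card_fin m))]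
        refine sum_congr rfl fun k _ => ?_
        rw [hindep, ← smul_eq_mul, ← sum_const]
        exact sum_congr rfl fun s hs => by rw [(mem_filter.1 hs).2]

end Hypergraph

theorem Nat.eq_of_forall_div_pow_mod_eq {q l l' : ℕ} (hq : 1 < q)
    (h : ∀ i, l / q ^ i % q = l' / q ^ i % q) : l = l' := by
  have hmod : ∀ n, l % q ^ n = l' % q ^ n := fun n => by
    induction n with
    | zero => simp [Nat.mod_one]
    | succ n ih => rw [Nat.mod_pow_succ, Nat.mod_pow_succ, ih, h]
  have hlt : ∀ x, x < q ^ (l + l') → x % q ^ (l + l') = x := fun x => Nat.mod_eq_of_lt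
  rw [← hlt l ((Nat.le_add_right l l').trans_lt (Nat.lt_pow_self hq)), hmod,
    hlt l' ((Nat.le_add_left l' l).trans_lt (Nat.lt_pow_self hq))]

section Enumeration

variable {Fq : Type*} [Field Fq] [Fintype Fq] {a : Fin (Fintype.card Fq) → Fq}

theorem fenum_coeff (ha0 : a ⟨0, Fintype.card_pos⟩ = 0) (l i : ℕ) :
    (fenum a l).coeff i =
      a ⟨l / Fintype.card Fq ^ i % Fintype.card Fq, Nat.mod_lt _ Fintype.card_pos⟩ := by
  simp only [fenum, finsetSum_coeff, coeff_C_mul_X_pow, sum_ite_eq, mem_range]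
  split_ifs with hi
  · rfl
  · have : l / Fintype.card Fq ^ i = 0 :=
      Nat.div_eq_of_lt ((by omega : l < i).trans (Nat.lt_pow_self Fintype.one_lt_card))
    simp only [this, Nat.zero_mod, ha0]

theorem fenum_coeff_eq_zero_of_lt (ha0 : a ⟨0, Fintype.card_pos⟩ = 0) {l i : ℕ}
    (hl : l < Fintype.card Fq ^ i) : (fenum a l).coeff i = 0 := by
  simp only [fenum_coeff ha0, Nat.div_eq_of_lt hl, Nat.zero_mod, ha0]

theorem fenum_injective (ha : Function.Injective a) (ha0 : a ⟨0, Fintype.card_pos⟩ = 0) :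
    Function.Injective (fenum a) := fun l l' h =>
  Nat.eq_of_forall_div_pow_mod_eq (Fintype.one_lt_card (α := Fq)) fun i =>
    Fin.mk.inj_iff.1 <| ha <| by simpa only [fenum_coeff ha0] using congrArg (coeff · i) h

theorem degree_fenum_lt (ha0 : a ⟨0, Fintype.card_pos⟩ = 0) {n l : ℕ}
    (hl : l < Fintype.card Fq ^ n) : (fenum a l).degree < n :=
  degree_lt_iff_coeff_zero _ _ |>.2 fun i hi => fenum_coeff_eq_zero_of_lt ha0 <|
    hl.trans_le (Nat.pow_le_pow_right Fintype.card_pos (by exact_mod_cast hi))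

theorem fenum_add_pow_mul (ha0 : a ⟨0, Fintype.card_pos⟩ = 0) {d v : ℕ}
    (hv : v < Fintype.card Fq ^ d) (u : ℕ) :
    fenum a (v + Fintype.card Fq ^ d * u) = fenum a v + X ^ d * fenum a u := by
  have hq : 0 < Fintype.card Fq := Fintype.card_pos
  ext i
  rw [coeff_add, X_pow_mul, coeff_mul_X_pow']
  split_ifs with hdi
  · have hdiv : (v + Fintype.card Fq ^ d * u) / Fintype.card Fq ^ i =
        u / Fintype.card Fq ^ (i - d) := by
      rw [show Fintype.card Fq ^ i = Fintype.card Fq ^ d * Fintype.card Fq ^ (i - d) by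
          rw [← pow_add, Nat.add_sub_cancel' hdi],
        ← Nat.div_div_eq_div_mul, Nat.add_mul_div_left _ _ (pow_pos hq d), Nat.div_eq_of_lt hv,
        zero_add]
    rw [fenum_coeff_eq_zero_of_lt ha0 (hv.trans_le (Nat.pow_le_pow_right hq hdi)), zero_add,
      fenum_coeff ha0, fenum_coeff ha0]
    simp only [hdiv]
  · have hdiv : (v + Fintype.card Fq ^ d * u) / Fintype.card Fq ^ i =
        v / Fintype.card Fq ^ i + Fintype.card Fq * (Fintype.card Fq ^ (d - i - 1) * u) := by
      rw [show Fintype.card Fq ^ d = Fintype.card Fq ^ i *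
          (Fintype.card Fq * Fintype.card Fq ^ (d - i - 1)) by
          rw [← pow_succ', ← pow_add]; congr 1; omega,
        mul_assoc, Nat.add_mul_div_left _ _ (pow_pos hq i), mul_assoc]
    rw [add_zero, fenum_coeff ha0, fenum_coeff ha0]
    simp only [hdiv, Nat.add_mul_mod_self_left]

end Enumeration

section Residues

variable {K : Type*} [Field K] {ι : Type*}

theorem natCard_quotient_span_of_monic {g : K[X]} (hg : g.Monic) :
    Nat.card (K[X] ⧸ Ideal.span {g}) = Nat.card K ^ g.natDegree := by
  have := (AdjoinRoot.powerBasis' hg).finite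
  change Nat.card (AdjoinRoot g) = _
  rw [Module.natCard_eq_pow_finrank (K := K), (AdjoinRoot.powerBasis' hg).finrank,
    AdjoinRoot.powerBasis'_dim]

noncomputable def residues (g : ι → K[X]) : K[X] →+* ∀ i, K[X] ⧸ Ideal.span {g i} :=
  RingHom.pi fun i => Ideal.Quotient.mk (Ideal.span {g i})

theorem residues_apply_eq_zero_iff {g : ι → K[X]} {p : K[X]} {i : ι} :
    residues g p i = 0 ↔ g i ∣ p :=
  Ideal.Quotient.eq_zero_iff_dvd (g i) p

theorem eq_of_residues_eq [Fintype ι] {g : ι → K[X]} (hg : ∀ i, (g i).Monic)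
    (hcop : Pairwise fun i j => IsCoprime (g i) (g j)) {p p' : K[X]}
    (hp : p.degree < (∏ i, g i).natDegree) (hp' : p'.degree < (∏ i, g i).natDegree)
    (h : residues g p = residues g p') : p = p' := by
  have hdvd : ∀ i ∈ univ, g i ∣ p - p' := fun i _ => by
    rw [← residues_apply_eq_zero_iff, map_sub, h, sub_self, Pi.zero_apply]
  have hprod : ∏ i, g i ∣ p - p' := prod_dvd_of_coprime (fun i _ j _ hij => hcop hij) hdvd
  have hdeg : (p - p').degree < (∏ i, g i).degree := by
    rw [degree_eq_natDegree (monic_prod_of_monic _ _ fun i _ => hg i).ne_zero]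
    exact (degree_sub_le p p').trans_lt (max_lt hp hp')
  exact sub_eq_zero.1 (eq_zero_of_dvd_of_degree_lt hprod hdeg)

theorem pairwise_isCoprime_pow {S : Finset K[X]} (hS : ∀ f ∈ S, f.Monic ∧ Irreducible f)
    (r : ℕ) : Pairwise fun f f' : S => IsCoprime (f.1 ^ r) (f'.1 ^ r) := by
  rintro ⟨f, hf⟩ ⟨f', hf'⟩ hne
  refine IsCoprime.pow <| (hS f hf).2.coprime_iff_not_dvd.2 fun hdvd => hne <| Subtype.ext ?_
  exact eq_of_monic_of_associated (hS f hf).1 (hS f' hf').1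
    ((hS f hf).2.associated_of_dvd (hS f' hf').2 hdvd)

theorem forall_dvd_iff_nonvanishingOnEdges_residues {m r : ℕ} {H : Finset (Finset (Fin m))}
    {S : Finset K[X]} {p : Fin m → K[X]} :
    (∀ e ∈ H, ∀ f ∈ S, ¬ ∀ i ∈ e, f ^ r ∣ p i) ↔
      ∀ f : S, NonvanishingOnEdges H fun i => residues (fun f : S => f.1 ^ r) (p i) f := by
  simp only [NonvanishingOnEdges, residues_apply_eq_zero_iff, Subtype.forall]
  exact ⟨fun h f hf e he => h e he f hf, fun h e he f hf => h f hf e he⟩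

end Residues

section ResidueEnumeration

variable {Fq : Type*} [Field Fq] [Fintype Fq] {a : Fin (Fintype.card Fq) → Fq}
  {ι : Type*} [Fintype ι] {g : ι → Fq[X]}

theorem bijective_residues_fenum (ha : Function.Injective a)
    (ha0 : a ⟨0, Fintype.card_pos⟩ = 0) (hg : ∀ i, (g i).Monic)
    (hcop : Pairwise fun i j => IsCoprime (g i) (g j)) :
    Function.Bijective fun v : Fin (Fintype.card Fq ^ (∏ i, g i).natDegree) =>
      residues g (fenum a v) := by
  have hcard : Nat.card (∀ i, Fq[X] ⧸ Ideal.span {g i}) =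
      Nat.card (Fin (Fintype.card Fq ^ (∏ i, g i).natDegree)) := by
    rw [Nat.card_pi, Nat.card_eq_fintype_card (α := Fin _), Fintype.card_fin,
      natDegree_prod_of_monic _ _ fun i _ => hg i, ← prod_pow_eq_pow_sum]
    simp only [natCard_quotient_span_of_monic (hg _), Nat.card_eq_fintype_card]
  have : Finite (∀ i, Fq[X] ⧸ Ideal.span {g i}) := Nat.finite_of_card_ne_zero (by simp [hcard])
  refine (Nat.bijective_iff_injective_and_card _).2 ⟨fun v v' h => ?_, hcard.symm⟩
  exact Fin.ext <| fenum_injective ha ha0 <| eq_of_residues_eq hg hcop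
    (degree_fenum_lt ha0 v.2) (degree_fenum_lt ha0 v'.2) h

theorem exists_equiv_prod_residues_fenum (ha : Function.Injective a)
    (ha0 : a ⟨0, Fintype.card_pos⟩ = 0) (hg : ∀ i, (g i).Monic)
    (hcop : Pairwise fun i j => IsCoprime (g i) (g j)) {F : Fq[X]} (hF : ∏ i, g i = F)
    (b : ℕ) :
    ∃ e : Fin (b * Fintype.card Fq ^ F.natDegree) ≃ Fin b × ∀ i, Fq[X] ⧸ Ideal.span {g i},
      ∀ l, (e l).2 = residues g (fenum a l) := by
  subst hF
  refine ⟨finProdFinEquiv.symm.trans <| Equiv.prodShear (Equiv.refl _) fun u =>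
    (Equiv.ofBijective _ (bijective_residues_fenum ha ha0 hg hcop)).trans
      (Equiv.addRight (residues g (X ^ (∏ i, g i).natDegree * fenum a u))), fun l => ?_⟩
  obtain ⟨⟨u, v⟩, rfl⟩ := finProdFinEquiv.surjective l
  simp only [Equiv.trans_apply, Equiv.symm_apply_apply, Equiv.prodShear_apply,
    Equiv.ofBijective_apply, Equiv.coe_addRight, finProdFinEquiv_apply_val]
  rw [fenum_add_pow_mul ha0 v.2, map_add]

theorem natCard_hwise_fenum {m r : ℕ} {H : Finset (Finset (Fin m))} {S : Finset Fq[X]}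
    (ha : Function.Injective a) (ha0 : a ⟨0, Fintype.card_pos⟩ = 0)
    (hS : ∀ f ∈ S, f.Monic ∧ Irreducible f) {F : Fq[X]} (hF : F = ∏ f ∈ S, f ^ r) (b : ℕ) :
    Nat.card {t : Fin m → Fin (b * Fintype.card Fq ^ F.natDegree) //
        ∀ e ∈ H, ∀ f ∈ S, ¬ ∀ i ∈ e, f ^ r ∣ fenum a (t i)} =
      b ^ m * ∏ f : S, ∑ k ∈ range (m + 1),
        indepCount H k * (Fintype.card Fq ^ (r * f.1.natDegree) - 1) ^ (m - k) := by
  have hmonic : ∀ f : S, (f.1 ^ r).Monic := fun f => (hS f f.2).1.pow r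
  obtain ⟨e, he⟩ := exists_equiv_prod_residues_fenum ha ha0 hmonic (pairwise_isCoprime_pow hS r)
    (F := F) (by rw [hF, prod_coe_sort S (· ^ r)]) b
  simp only [forall_dvd_iff_nonvanishingOnEdges_residues, ← he]
  rw [natCard_subtype_comp_snd e fun σ => ∀ f : S, NonvanishingOnEdges H fun i => σ i f,
    natCard_subtype_forall_pi, Nat.card_fin, Nat.card_fin]
  refine congrArg (b ^ m * ·) (prod_congr rfl fun f _ => ?_)
  have hcard := natCard_quotient_span_of_monic (hmonic f)
  have : Finite (Fq[X] ⧸ Ideal.span {f.1 ^ r}) := Nat.finite_of_card_ne_zero (by simp [hcard])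
  rw [card_nonvanishingOnEdges, hcard, (hS f f.2).1.natDegree_pow, Nat.card_eq_fintype_card]

end ResidueEnumeration

theorem count_hwise_in_M_N_general {Fq : Type*} [Field Fq] [Fintype Fq]
    (a : Fin (Fintype.card Fq) → Fq) (ha : Function.Bijective a)
    (ha0 : a ⟨0, Fintype.card_pos⟩ = 0)
    (r m : ℕ)
    (H : Finset (Finset (Fin m)))
    (S : Finset (Polynomial Fq)) (hS : ∀ f ∈ S, f.Monic ∧ Irreducible f)
    (E : Set (Fin m → Polynomial Fq))
    (hE : ∀ g, g ∈ E ↔ ∀ e ∈ H, ∀ f ∈ S, ¬ (∀ i ∈ e, f ^ r ∣ g i))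
    (F : Polynomial Fq) (hF : F = ∏ f ∈ S, f ^ r)
    (b : ℕ) (hb : 1 ≤ b) (N : ℕ) (hN : N = b * Fintype.card Fq ^ F.natDegree - 1) :
    (Nat.card {g : Fin m → Polynomial Fq //
        g ∈ E ∧ ∀ i, ∃ l ≤ N, g i = fenum a l} : ℝ) =
      ((b : ℝ) * (Fintype.card Fq : ℝ) ^ F.natDegree) ^ m *
        (∏ f ∈ S, ((Fintype.card Fq : ℝ) ^ (r * m * f.natDegree))⁻¹) *
        ∏ f ∈ S, ∑ k ∈ Finset.range (m + 1), (indepCount H k : ℝ) *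
          ((Fintype.card Fq : ℝ) ^ (r * f.natDegree) - 1) ^ (m - k) := by
  have hq : 0 < Fintype.card Fq := Fintype.card_pos
  have hM : ∀ p, (∃ l ≤ N, p = fenum a l) ↔
      p ∈ Set.range fun l : Fin (b * Fintype.card Fq ^ F.natDegree) => fenum a l := fun p => by
    have : 0 < b * Fintype.card Fq ^ F.natDegree := by positivity
    exact ⟨fun ⟨l, hl, hp⟩ => ⟨⟨l, by omega⟩, hp.symm⟩, fun ⟨l, hp⟩ => ⟨l, by omega, hp.symm⟩⟩
  have hcount : Nat.card {g : Fin m → Fq[X] // g ∈ E ∧ ∀ i, ∃ l ≤ N, g i = fenum a l} =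
      b ^ m * ∏ f : S, ∑ k ∈ range (m + 1),
        indepCount H k * (Fintype.card Fq ^ (r * f.1.natDegree) - 1) ^ (m - k) := by
    simp only [hM, hE]
    rw [natCard_subtype_and_forall_mem_range fun l l' h => Fin.ext (fenum_injective ha.1 ha0 h)]
    exact natCard_hwise_fenum ha.1 ha0 hS hF b
  have hexp : F.natDegree * m = ∑ f ∈ S, r * m * f.natDegree := by
    rw [hF, natDegree_prod_of_monic _ _ fun f hf => (hS f hf).1.pow r, sum_mul]
    exact sum_congr rfl fun f hf => by rw [(hS f hf).1.natDegree_pow r]; ring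
  have hscale : ((b : ℝ) * (Fintype.card Fq : ℝ) ^ F.natDegree) ^ m *
      ∏ f ∈ S, ((Fintype.card Fq : ℝ) ^ (r * m * f.natDegree))⁻¹ = (b : ℝ) ^ m := by
    rw [prod_inv_distrib, prod_pow_eq_pow_sum, mul_pow, ← pow_mul, hexp, mul_assoc,
      mul_inv_cancel₀ (by positivity), mul_one]
  rw [hcount, hscale, ← prod_coe_sort S]
  push_cast [Nat.one_le_pow _ _ hq]
  rfl

/-- Proposition 3.3: the exact count of tuples in `E_S ∩ ℳ_N`, where
`F = ∏_{f ∈ S} f^r` and `N = b·q^{deg F} - 1`. -/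
theorem count_hwise_in_M_N {Fq : Type*} [Field Fq] [Fintype Fq]
    (a : Fin (Fintype.card Fq) → Fq) (ha : Function.Bijective a)
    (ha0 : a ⟨0, Fintype.card_pos⟩ = 0)
    (r j m : ℕ) (hr : 1 ≤ r) (hj : 1 ≤ j) (hjm : j ≤ m)
    (H : Finset (Finset (Fin m))) (hH : ∀ e ∈ H, e.card = j)
    (S : Finset (Polynomial Fq)) (hS : ∀ f ∈ S, f.Monic ∧ Irreducible f)
    (E : Set (Fin m → Polynomial Fq))
    (hE : ∀ g, g ∈ E ↔ ∀ e ∈ H, ∀ f ∈ S, ¬ (∀ i ∈ e, f ^ r ∣ g i))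
    (F : Polynomial Fq) (hF : F = ∏ f ∈ S, f ^ r)
    (b : ℕ) (hb : 1 ≤ b) (N : ℕ) (hN : N = b * Fintype.card Fq ^ F.natDegree - 1) :
    (Nat.card {g : Fin m → Polynomial Fq //
        g ∈ E ∧ ∀ i, ∃ l ≤ N, g i = fenum a l} : ℝ) =
      ((b : ℝ) * (Fintype.card Fq : ℝ) ^ F.natDegree) ^ m *
        (∏ f ∈ S, ((Fintype.card Fq : ℝ) ^ (r * m * f.natDegree))⁻¹) *
        ∏ f ∈ S, ∑ k ∈ Finset.range (m + 1), (indepCount H k : ℝ) *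
          ((Fintype.card Fq : ℝ) ^ (r * f.natDegree) - 1) ^ (m - k) :=
  count_hwise_in_M_N_general a ha ha0 r m H S hS E hE F hF b hb N hN
end

section
/- Fix integers m ≥ j ≥ 2 and let H be a j-uniform hypergraph on the vertex set {1,…,m}. Then for every real x ∈ [0,1], ∑_{k=0}^m i_k(H) x^k (1−x)^{m−k} ≥ 1 − (m−1)^2 x^2. -/
open scoped BigOperators

/-! All terms of the sum are nonnegative and the first two already suffice: every set of at most
one vertex is independent, so `i₀ = 1` and `i₁ = m`, and these two terms equal
`(1 - x)^(m-1) (1 + (m-1) x)`. By Bernoulli's inequality this is at least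
`(1 - (m-1) x) (1 + (m-1) x) = 1 - (m-1)^2 x^2`. -/

theorem indepCount_eq_choose_of_lt_card {m k : ℕ} {H : Finset (Finset (Fin m))}
    (hH : ∀ e ∈ H, k < e.card) : indepCount H k = m.choose k := by
  have hindep : ∀ s : Finset (Fin m), s.card = k → ∀ e ∈ H, ¬ e ⊆ s :=
    fun s hs e he hsub => (Finset.card_le_card hsub).not_gt (hs ▸ hH e he)
  rw [indepCount, Nat.card_eq_fintype_card,
    Fintype.card_congr (Equiv.subtypeEquivRight fun s => and_iff_right_of_imp (hindep s)),
    Fintype.card_finset_len, Fintype.card_fin]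

theorem one_sub_mul_sq_le_one_sub_pow_mul_one_add {x : ℝ} (hx0 : 0 ≤ x) (hx2 : x ≤ 2) (n : ℕ) :
    1 - (n * x) ^ 2 ≤ (1 - x) ^ n * (1 + n * x) := by
  have bernoulli : 1 - n * x ≤ (1 - x) ^ n := by
    simpa [← sub_eq_add_neg] using one_add_mul_le_pow (a := -x) (by linarith) n
  calc 1 - (n * x) ^ 2 = (1 - n * x) * (1 + n * x) := by ring
    _ ≤ (1 - x) ^ n * (1 + n * x) := by gcongr

/-- For a `j`-uniform hypergraph `H` on `m` vertices with `m ≥ j ≥ 2` and `x ∈ [0,1]`,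
`∑_{k=0}^m i_k(H) x^k (1-x)^{m-k} ≥ 1 - (m-1)^2 x^2`. -/
theorem indep_poly_ge {j m : ℕ} (hj : 2 ≤ j) (hjm : j ≤ m)
    (H : Finset (Finset (Fin m))) (hH : ∀ e ∈ H, e.card = j)
    (x : ℝ) (hx0 : 0 ≤ x) (hx1 : x ≤ 1) :
    1 - ((m : ℝ) - 1) ^ 2 * x ^ 2 ≤
      ∑ k ∈ Finset.range (m + 1), (indepCount H k : ℝ) * x ^ k * (1 - x) ^ (m - k) := by
  have hi0 : indepCount H 0 = 1 :=
    (indepCount_eq_choose_of_lt_card (k := 0) fun e he => by rw [hH e he]; omega).trans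
      m.choose_zero_right
  have hi1 : indepCount H 1 = m :=
    (indepCount_eq_choose_of_lt_card (k := 1) fun e he => by rw [hH e he]; omega).trans
      m.choose_one_right
  obtain ⟨n, rfl⟩ : ∃ n, m = n + 1 := ⟨m - 1, by omega⟩
  set f : ℕ → ℝ := fun k => (indepCount H k : ℝ) * x ^ k * (1 - x) ^ (n + 1 - k)
  have hf_nonneg : ∀ k, 0 ≤ f k := fun k => by
    have : 0 ≤ 1 - x := by linarith
    positivity
  calc 1 - ((↑(n + 1) : ℝ) - 1) ^ 2 * x ^ 2 = 1 - (n * x) ^ 2 := by push_cast; ring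
    _ ≤ (1 - x) ^ n * (1 + n * x) :=
      one_sub_mul_sq_le_one_sub_pow_mul_one_add hx0 (by linarith) n
    _ = f 0 + f 1 := by simp only [f, hi0, hi1]; push_cast; ring
    _ ≤ ∑ k ∈ Finset.range (n + 1 + 1), f k :=
      Finset.add_le_sum (fun k _ => hf_nonneg k) (by simp) (by simp) zero_ne_one
end
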